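/- Let (V; M0,...,M4; c) be a Higmanian matrix configuration with valencies ni = c(i,i,0). Suppose c(3,3,3) = c(3,3,4) and (as rational numbers) 1/n3 + 1/n4 = 1/n1 − 1/(n1+1). Then for each i ∈ {3,4}, the matrix A = M2 + Mi is the adjacency matrix of a divisible design graph with class matrix P = N1 = M0+M1+M2 and parameters v = 1+n1+n2+n3+n4, k = n2+ni, λ1 = n2 + ni·(n1·ni − n_{7−i})/(n1·(n3+n4)), λ2 = 2·n2·ni/(n3+n4) + ni^2·(n3+n4−n2−n1−1)/(n3+n4)^2, m = 1 + (n3+n4)/(1+n1+n2), n = 1+n1+n2; in particular λ1, λ2 and m are nonnegative integers and A^2 = k•I + λ1•(N1−I) + λ2•(J−N1). -/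

import Mathlib

/-!
The basis matrices have disjoint supports, so every coefficient of a combination
`∑ a k • M k` can be read off at a single entry, and each matrix identity turns into identities
between structure constants. Two families of such identities carry the argument: the trace
identity `c i j k * n k = c i k j * n j` and the row sums `∑ j, c i j k = n i`.

Closedness of the parabolic `N1` kills `c a b k` for `a, b ≤ 2 < k`. If `E` is `N0` or `N1`
(with `E * E = e • E`), then `E * M3 = x • M3 + y • M4`, and comparing coefficients in
`E * (E * M3) = e • (E * M3)` gives `x = y` or `E * M3 = e • M3`; the radical condition rules
out the second case. From this the trace and row-sum identities give all constants `c i i k`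
and `c 2 i k` for `i ∈ {3, 4}`, once `c 3 3 3 = c 3 3 4` is assumed. Eq. (1) is exactly what
makes the coefficients of `M1` and `M2` in `(M2 + Mi)²` equal, so the square is a combination
of `I`, `N1 - I` and `J - N1`.
-/

open Matrix Finset

/-- A *Higmanian matrix configuration* on a nonempty finite set `V`:
five nonzero symmetric `{0,1}`-matrices `M 0, …, M 4` over `ℤ` summing to the all-ones
matrix, with `M 0 = I`, structure constants `c`, parabolic conditions for
`N0 = M0 + M1` and `N1 = M0 + M1 + M2`, standard ordering `n3 ≤ n4`, and triviality of
the radicals of `M 3` and `M 4`. -/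
structure HigmanianConfig (V : Type*) [Fintype V] [DecidableEq V] : Type _ where
  nonempty : Nonempty V
  M : Fin 5 → Matrix V V ℤ
  c : Fin 5 → Fin 5 → Fin 5 → ℕ
  M_ne_zero : ∀ i, M i ≠ 0
  M_symm : ∀ i, (M i)ᵀ = M i
  M_entries : ∀ i x y, M i x y = 0 ∨ M i x y = 1
  M_zero : M 0 = 1
  sum_M : M 0 + M 1 + M 2 + M 3 + M 4 = Matrix.of fun _ _ => 1
  mul_M : ∀ i j, M i * M j = ∑ k : Fin 5, (c i j k : ℤ) • M k
  N0_sq : (M 0 + M 1) * (M 0 + M 1) = ((1 + c 1 1 0 : ℕ) : ℤ) • (M 0 + M 1)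
  N1_sq : (M 0 + M 1 + M 2) * (M 0 + M 1 + M 2)
      = ((1 + c 1 1 0 + c 2 2 0 : ℕ) : ℤ) • (M 0 + M 1 + M 2)
  N1_ne_J : M 0 + M 1 + M 2 ≠ Matrix.of fun _ _ => 1
  n3_le_n4 : c 3 3 0 ≤ c 4 4 0
  radical : ∀ j ∈ ({3, 4} : Finset (Fin 5)), ∀ T : Finset (Fin 5),
    T.Nonempty → T ⊆ ({1, 2, 3, 4} : Finset (Fin 5)) →
    ¬ ((1 + ∑ t ∈ T, M t) * (1 + ∑ t ∈ T, M t)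
          = (1 + ∑ t ∈ T, (c t t 0 : ℤ)) • (1 + ∑ t ∈ T, M t)
        ∧ (1 + ∑ t ∈ T, M t) * M j = (1 + ∑ t ∈ T, (c t t 0 : ℤ)) • M j)

/-- The valency `nᵢ = c i i 0` of the `i`-th basis matrix. -/
def HigmanianConfig.n {V : Type*} [Fintype V] [DecidableEq V]
    (X : HigmanianConfig V) (i : Fin 5) : ℕ := X.c i i 0

theorem eq_or_of_mul_self_eq_smul {R : Type*} [Ring R] {E A B : R} {e x y : ℤ}
    (hAB : LinearIndependent ℤ ![A, B]) (hE : E * E = e • E)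
    (hA : E * A = x • A + y • B) (hB : E * B = (e - x) • A + (e - y) • B) :
    x = y ∨ (x = e ∧ y = 0) := by
  have key : E * (E * A) = e • (E * A) := by rw [← mul_assoc, hE, smul_mul_assoc]
  rw [hA, mul_add, mul_smul_comm, mul_smul_comm, hA, hB] at key
  obtain ⟨h1, h2⟩ := hAB.eq_of_pair (s := x * x + y * (e - x)) (t := x * y + y * (e - y))
    (s' := e * x) (t' := e * y) (by linear_combination (norm := module) key)
  have h1' : (x - y) * (x - e) = 0 := by linear_combination h1
  have h2' : y * (x - y) = 0 := by linear_combination h2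
  rcases mul_eq_zero.mp h1' with h | h
  · exact Or.inl (sub_eq_zero.mp h)
  · rcases mul_eq_zero.mp h2' with h' | h'
    · exact Or.inr ⟨sub_eq_zero.mp h, h'⟩
    · exact Or.inl (sub_eq_zero.mp h')

theorem Matrix.dvd_card_of_mul_self_eq_smul {V : Type*} [Fintype V] [DecidableEq V]
    {P : Matrix V V ℤ} {n : ℕ} (h01 : ∀ x y, P x y = 0 ∨ P x y = 1) (hsymm : Pᵀ = P)
    (hdiag : ∀ x, P x x = 1) (hsq : P * P = (n : ℤ) • P) : n ∣ Fintype.card V := by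
  have hcomm (x y : V) : P y x = P x y := by rw [← transpose_apply P x y, hsymm]
  have hnonneg (x y : V) : 0 ≤ P x y := by rcases h01 x y with h | h <;> simp [h]
  have htrans {x y z : V} (hxy : P x y = 1) (hyz : P y z = 1) : P x z = 1 := by
    have hle : P x y * P y z ≤ (P * P) x z :=
      single_le_sum (f := fun w => P x w * P w z)
        (fun w _ => mul_nonneg (hnonneg x w) (hnonneg w z)) (mem_univ y)
    rw [hsq, smul_apply, hxy, hyz, smul_eq_mul] at hle
    rcases h01 x z with h | h
    · simp [h] at hle
    · exact h
  set cls : V → Finset V := fun x => {y | P x y = 1}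
  have hcard (x : V) : #(cls x) = n := by
    have h : ((cls x).card : ℤ) = (P * P) x x := by
      rw [mul_apply, card_filter]
      push_cast
      refine sum_congr rfl fun y _ => ?_
      rw [hcomm x y]
      rcases h01 x y with h | h <;> simp [h]
    rw [hsq, smul_apply, hdiag, smul_eq_mul, mul_one] at h
    exact_mod_cast h
  have hfiber (x : V) : {a ∈ (univ : Finset V) | cls a = cls x} = cls x := by
    ext a
    simp only [mem_filter, mem_univ, true_and, cls]
    constructor
    · intro h
      have hx : x ∈ cls a := by rw [show cls a = cls x from h]; simp [cls, hdiag]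
      simpa [cls, hcomm] using hx
    · intro h
      ext y
      simp only [mem_filter, mem_univ, true_and]
      exact ⟨htrans h, htrans (by rwa [hcomm])⟩
  rw [← card_univ, card_eq_sum_card_image cls univ]
  refine dvd_sum fun b hb => ?_
  obtain ⟨x, -, rfl⟩ := mem_image.mp hb
  rw [hfiber, hcard]

namespace HigmanianConfig

variable {V : Type*} [Fintype V] [DecidableEq V] (X : HigmanianConfig V)

lemma M_apply_nonneg (k : Fin 5) (x y : V) : 0 ≤ X.M k x y := by
  rcases X.M_entries k x y with h | h <;> simp [h]

lemma M_apply_comm (k : Fin 5) (x y : V) : X.M k y x = X.M k x y := by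
  rw [← transpose_apply (X.M k) x y, X.M_symm]

lemma sum_M_apply (x y : V) : ∑ k, X.M k x y = 1 := by
  simpa [Fin.sum_univ_five] using congrFun (congrFun X.sum_M x) y

lemma sum_M_apply_eq_zero_or_one (S : Finset (Fin 5)) (x y : V) :
    (∑ t ∈ S, X.M t) x y = 0 ∨ (∑ t ∈ S, X.M t) x y = 1 := by
  have h0 : 0 ≤ ∑ t ∈ S, X.M t x y := sum_nonneg fun t _ => X.M_apply_nonneg t x y
  have h1 : ∑ t ∈ S, X.M t x y ≤ 1 := X.sum_M_apply x y ▸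
    sum_le_sum_of_subset_of_nonneg (subset_univ S) fun t _ _ => X.M_apply_nonneg t x y
  rw [Matrix.sum_apply]
  omega

lemma M_add_M_apply_eq_zero_or_one {i j : Fin 5} (hij : i ≠ j) (x y : V) :
    (X.M i + X.M j) x y = 0 ∨ (X.M i + X.M j) x y = 1 := by
  rw [← sum_pair hij]
  exact X.sum_M_apply_eq_zero_or_one _ x y

lemma M_apply_eq_zero_of_ne {i j : Fin 5} (hij : i ≠ j) {x y : V} (h : X.M i x y = 1) :
    X.M j x y = 0 := by
  have h01 := X.M_add_M_apply_eq_zero_or_one hij x y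
  rw [Matrix.add_apply, h] at h01
  have := X.M_apply_nonneg j x y
  omega

lemma M_apply_self (k : Fin 5) (x : V) : X.M k x x = if k = 0 then 1 else 0 := by
  have h0 : X.M 0 x x = 1 := by simp [X.M_zero]
  split_ifs with hk
  · rw [hk, h0]
  · exact X.M_apply_eq_zero_of_ne (Ne.symm hk) h0

lemma exists_M_apply_eq_one (k : Fin 5) : ∃ p : V × V, X.M k p.1 p.2 = 1 := by
  by_contra! h
  exact X.M_ne_zero k (Matrix.ext fun x y => (X.M_entries k x y).resolve_right (h (x, y)))

/-- The coefficient of `M k` in a combination of the basis matrices: since their supports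
are disjoint, it is the entry at any position where `M k` is one. -/
noncomputable def coeff (k : Fin 5) : Matrix V V ℤ →ₗ[ℤ] ℤ :=
  entryLinearMap ℤ ℤ (X.exists_M_apply_eq_one k).choose.1 (X.exists_M_apply_eq_one k).choose.2

lemma coeff_M (k l : Fin 5) : X.coeff k (X.M l) = if l = k then 1 else 0 := by
  have h := (X.exists_M_apply_eq_one k).choose_spec
  simp only [coeff, entryLinearMap_apply]
  split_ifs with hlk
  · rw [hlk, h]
  · exact X.M_apply_eq_zero_of_ne (Ne.symm hlk) h

lemma coeff_sum_smul_M (k : Fin 5) (a : Fin 5 → ℤ) :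
    X.coeff k (∑ l, a l • X.M l) = a k := by
  simp only [map_sum, map_zsmul, coeff_M, smul_eq_mul, mul_ite, mul_one, mul_zero,
    sum_ite_eq', mem_univ, if_true]

lemma coeff_M_mul_M (i j k : Fin 5) : X.coeff k (X.M i * X.M j) = X.c i j k := by
  rw [X.mul_M, coeff_sum_smul_M]

lemma M_mul_comm (i j : Fin 5) : X.M i * X.M j = X.M j * X.M i := by
  calc X.M i * X.M j = (X.M i * X.M j)ᵀ := by
        simp only [X.mul_M, transpose_sum, transpose_smul, X.M_symm]
    _ = X.M j * X.M i := by rw [transpose_mul, X.M_symm, X.M_symm]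

lemma c_comm (i j k : Fin 5) : X.c i j k = X.c j i k := by
  exact_mod_cast (X.coeff_M_mul_M i j k).symm.trans (X.M_mul_comm i j ▸ X.coeff_M_mul_M j i k)

lemma c_zero_left (j k : Fin 5) : X.c 0 j k = if j = k then 1 else 0 := by
  have h := X.coeff_M_mul_M 0 j k
  rw [X.M_zero, one_mul, coeff_M] at h
  split_ifs at h ⊢ <;> omega

lemma c_zero_right (i k : Fin 5) : X.c i 0 k = if i = k then 1 else 0 := by
  rw [c_comm, c_zero_left]

lemma M_mul_M_apply_self (i j : Fin 5) (x : V) : (X.M i * X.M j) x x = X.c i j 0 := by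
  simp only [X.mul_M, Matrix.sum_apply, Matrix.smul_apply, M_apply_self, smul_eq_mul, mul_ite,
    mul_one, mul_zero, sum_ite_eq', mem_univ, if_true]

lemma M_mul_M_apply_self_eq_sum (i j : Fin 5) (x : V) :
    (X.M i * X.M j) x x = ∑ y, X.M i x y * X.M j x y := by
  simp only [mul_apply, X.M_apply_comm j _ x]

lemma c_eq_zero_of_ne {i j : Fin 5} (hij : i ≠ j) : X.c i j 0 = 0 := by
  obtain ⟨x⟩ := X.nonempty
  have hsum := X.M_mul_M_apply_self_eq_sum i j x
  have hterm (y : V) : X.M i x y * X.M j x y = 0 := by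
    rcases X.M_entries i x y with h | h
    · rw [h, zero_mul]
    · rw [X.M_apply_eq_zero_of_ne hij h, mul_zero]
  simp only [hterm, sum_const_zero, M_mul_M_apply_self] at hsum
  exact_mod_cast hsum

lemma sum_M_row (i : Fin 5) (x : V) : ∑ y, X.M i x y = X.n i := by
  have hsum := X.M_mul_M_apply_self_eq_sum i i x
  have hterm (y : V) : X.M i x y * X.M i x y = X.M i x y := by
    rcases X.M_entries i x y with h | h <;> rw [h] <;> norm_num
  rw [M_mul_M_apply_self] at hsum
  simp only [hterm] at hsum
  exact hsum.symm

lemma n_pos (k : Fin 5) : 0 < X.n k := by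
  obtain ⟨⟨x, y⟩, h⟩ := X.exists_M_apply_eq_one k
  dsimp only at h
  have : X.M k x y ≤ ∑ z, X.M k x z :=
    single_le_sum (fun z _ => X.M_apply_nonneg k x z) (mem_univ y)
  rw [X.sum_M_row] at this
  omega

lemma n_zero : X.n 0 = 1 := by
  simp [n, c_zero_left]

lemma card_eq : Fintype.card V = 1 + X.n 1 + X.n 2 + X.n 3 + X.n 4 := by
  obtain ⟨x⟩ := X.nonempty
  have h : (Fintype.card V : ℤ) = ∑ k, (X.n k : ℤ) := by
    calc (Fintype.card V : ℤ) = ∑ y, ∑ k, X.M k x y := by simp [X.sum_M_apply]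
      _ = ∑ k, (X.n k : ℤ) := by rw [sum_comm]; simp only [X.sum_M_row]
  rw [Fin.sum_univ_five, n_zero] at h
  exact_mod_cast h

lemma M_mul_sum_M (i : Fin 5) : X.M i * ∑ j, X.M j = (X.n i : ℤ) • ∑ j, X.M j := by
  ext x y
  simp only [mul_apply, Matrix.smul_apply, Matrix.sum_apply, X.sum_M_apply, mul_one,
    X.sum_M_row, smul_eq_mul]

lemma sum_c (i k : Fin 5) : ∑ j, X.c i j k = X.n i := by
  have h := congrArg (X.coeff k) (X.M_mul_sum_M i)
  simp only [mul_sum, map_sum, map_zsmul, coeff_M_mul_M, coeff_M, smul_eq_mul, mul_one,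
    sum_ite_eq', mem_univ, if_true] at h
  exact_mod_cast h

lemma trace_M_mul_M (i j : Fin 5) : (X.M i * X.M j).trace = X.c i j 0 * Fintype.card V := by
  simp [trace, X.M_mul_M_apply_self, mul_comm]

lemma trace_M_mul_M_mul_M (i j k : Fin 5) :
    (X.M i * X.M j * X.M k).trace = X.c i j k * X.n k * Fintype.card V := by
  have hne (l : Fin 5) (hl : l ≠ k) : X.c l k 0 = 0 := X.c_eq_zero_of_ne hl
  simp only [X.mul_M i j, sum_mul, trace_sum, smul_mul_assoc, trace_smul, trace_M_mul_M]
  rw [sum_eq_single k (fun l _ hl => by simp [hne l hl]) (by simp)]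
  simp [n, mul_assoc]

/-- Both sides are `trace (M i * M j * M k) / card V`. -/
lemma c_mul_n (i j k : Fin 5) : X.c i j k * X.n k = X.c i k j * X.n j := by
  have h := X.trace_M_mul_M_mul_M i j k
  rw [mul_assoc, X.M_mul_comm j k, ← mul_assoc, X.trace_M_mul_M_mul_M] at h
  have hV : (Fintype.card V : ℤ) ≠ 0 := by
    have := Fintype.card_pos_iff.mpr X.nonempty
    positivity
  exact_mod_cast (mul_right_cancel₀ hV h).symm

lemma N1_eq_sum : X.M 0 + X.M 1 + X.M 2 = ∑ t ∈ ({0, 1, 2} : Finset (Fin 5)), X.M t := by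
  rw [sum_insert (by decide), sum_pair (by decide), add_assoc]

lemma N1_transpose : (X.M 0 + X.M 1 + X.M 2)ᵀ = X.M 0 + X.M 1 + X.M 2 := by
  simp only [transpose_add, X.M_symm]

lemma N1_apply_eq_zero_or_one (x y : V) :
    (X.M 0 + X.M 1 + X.M 2) x y = 0 ∨ (X.M 0 + X.M 1 + X.M 2) x y = 1 :=
  X.N1_eq_sum ▸ X.sum_M_apply_eq_zero_or_one _ x y

lemma N1_apply_self (x : V) : (X.M 0 + X.M 1 + X.M 2) x x = 1 := by
  simp [X.M_apply_self]

lemma exists_card_eq_mul : ∃ m : ℕ,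
    (m : ℚ) = 1 + (X.n 3 + X.n 4) / (1 + X.n 1 + X.n 2) ∧
      m * (1 + X.n 1 + X.n 2) = Fintype.card V := by
  obtain ⟨m, hm⟩ := Matrix.dvd_card_of_mul_self_eq_smul X.N1_apply_eq_zero_or_one X.N1_transpose
    X.N1_apply_self X.N1_sq
  refine ⟨m, ?_, by rw [hm, mul_comm]; rfl⟩
  have hcard : ((1 + X.n 1 + X.n 2) * m : ℚ) = 1 + X.n 1 + X.n 2 + (X.n 3 + X.n 4) := by
    rw [← add_assoc]
    exact_mod_cast hm.symm.trans X.card_eq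
  field_simp
  linear_combination hcard

lemma c_eq_zero_of_closed (S : Finset (Fin 5)) {e : ℤ}
    (hS : (∑ t ∈ S, X.M t) * (∑ t ∈ S, X.M t) = e • ∑ t ∈ S, X.M t)
    {a b k : Fin 5} (ha : a ∈ S) (hb : b ∈ S) (hk : k ∉ S) : X.c a b k = 0 := by
  have h := congrArg (X.coeff k) hS
  simp only [sum_mul_sum, map_sum, map_zsmul, coeff_M_mul_M, coeff_M, sum_ite_eq', hk,
    if_false, smul_zero] at h
  have h' : ∑ a ∈ S, ∑ b ∈ S, X.c a b k = 0 := by exact_mod_cast h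
  exact sum_eq_zero_iff.mp (sum_eq_zero_iff.mp h' a ha) b hb

lemma c_one_one_two : X.c 1 1 2 = 0 :=
  X.c_eq_zero_of_closed {0, 1} (e := ((1 + X.n 1 : ℕ) : ℤ))
    (by rw [sum_pair (by decide)]; exact X.N0_sq) (by decide) (by decide) (by decide)

lemma c_low_low_high {a b k : Fin 5} (ha : a ≤ 2) (hb : b ≤ 2) (hk : 2 < k) :
    X.c a b k = 0 := by
  have hmem : ∀ t : Fin 5, t ∈ ({0, 1, 2} : Finset (Fin 5)) ↔ t ≤ 2 := by decide
  refine X.c_eq_zero_of_closed {0, 1, 2} (e := ((1 + X.n 1 + X.n 2 : ℕ) : ℤ)) ?_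
    ((hmem a).mpr ha) ((hmem b).mpr hb) (fun h => absurd ((hmem k).mp h) (not_le.mpr hk))
  rw [← N1_eq_sum]
  exact X.N1_sq

lemma c_low_high_low {a j b : Fin 5} (ha : a ≤ 2) (hj : 2 < j) (hb : b ≤ 2) :
    X.c a j b = 0 := by
  have h := X.c_mul_n a j b
  rw [X.c_low_low_high ha hb hj, zero_mul] at h
  exact (mul_eq_zero.mp h).resolve_right (X.n_pos b).ne'

lemma c_low_three_add_c_low_four {a k : Fin 5} (ha : a ≤ 2) (hk : 2 < k) :
    X.c a 3 k + X.c a 4 k = X.n a := by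
  have h := X.sum_c a k
  rw [Fin.sum_univ_five, X.c_low_low_high ha (by decide) hk, X.c_low_low_high ha (by decide) hk,
    X.c_low_low_high ha (by decide) hk] at h
  simpa using h

lemma M_low_mul_M_high {t j : Fin 5} (ht : t ≤ 2) (hj : 2 < j) :
    X.M t * X.M j = (X.c t j 3 : ℤ) • X.M 3 + (X.c t j 4 : ℤ) • X.M 4 := by
  rw [X.mul_M, Fin.sum_univ_five, X.c_low_high_low ht hj (by decide),
    X.c_low_high_low ht hj (by decide), X.c_low_high_low ht hj (by decide)]
  simp

lemma c_one_two_two : X.c 1 2 2 = X.n 1 := by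
  have h := X.sum_c 1 2
  rw [Fin.sum_univ_five, c_zero_right, c_one_one_two,
    X.c_low_high_low (j := 3) (by decide) (by decide) le_rfl,
    X.c_low_high_low (j := 4) (by decide) (by decide) le_rfl] at h
  simpa using h

lemma c_two_two_one : X.c 2 2 1 = X.n 2 := by
  have h := X.c_mul_n 2 2 1
  rw [X.c_comm 2 1 2, c_one_two_two, mul_comm (X.n 1)] at h
  exact Nat.eq_of_mul_eq_mul_right (X.n_pos 1) h

lemma c_two_two_two : X.c 2 2 2 + X.n 1 + 1 = X.n 2 := by
  have h := X.sum_c 2 2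
  rw [Fin.sum_univ_five, c_zero_right, X.c_comm 2 1 2, c_one_two_two,
    X.c_low_high_low (j := 3) (by decide) (by decide) le_rfl,
    X.c_low_high_low (j := 4) (by decide) (by decide) le_rfl] at h
  simp at h
  omega

lemma linearIndependent_M_three_M_four : LinearIndependent ℤ ![X.M 3, X.M 4] := by
  refine LinearIndependent.pair_iff.mpr fun s t h => ?_
  have h3 := congrArg (X.coeff 3) h
  have h4 := congrArg (X.coeff 4) h
  simp only [map_add, map_zsmul, coeff_M, map_zero, smul_eq_mul] at h3 h4
  exact ⟨by simpa using h3, by simpa using h4⟩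

lemma one_add_sum_c_three_three_eq {T : Finset (Fin 5)} (hT : T.Nonempty) (hT12 : T ⊆ {1, 2})
    (hE : (1 + ∑ t ∈ T, X.M t) * (1 + ∑ t ∈ T, X.M t)
      = (1 + ∑ t ∈ T, (X.n t : ℤ)) • (1 + ∑ t ∈ T, X.M t)) :
    1 + ∑ t ∈ T, (X.c t 3 3 : ℤ) = ∑ t ∈ T, (X.c t 3 4 : ℤ) := by
  have hlow : ∀ t ∈ T, t ≤ 2 := fun t ht => by
    rcases mem_insert.mp (hT12 ht) with rfl | h
    · decide
    · rw [mem_singleton.mp h]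
  have hmul (j : Fin 5) (hj : 2 < j) : (1 + ∑ t ∈ T, X.M t) * X.M j
      = X.M j + (∑ t ∈ T, (X.c t j 3 : ℤ)) • X.M 3
        + (∑ t ∈ T, (X.c t j 4 : ℤ)) • X.M 4 := by
    rw [add_mul, one_mul, sum_mul, sum_congr rfl fun t ht => X.M_low_mul_M_high (hlow t ht) hj,
      sum_add_distrib, sum_smul, sum_smul, add_assoc]
  have hc4 (k : Fin 5) (hk : 2 < k) :
      ∑ t ∈ T, (X.c t 4 k : ℤ)
        = ∑ t ∈ T, (X.n t : ℤ) - ∑ t ∈ T, (X.c t 3 k : ℤ) := by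
    rw [← sum_sub_distrib]
    refine sum_congr rfl fun t ht => ?_
    have := X.c_low_three_add_c_low_four (hlow t ht) hk
    omega
  rcases eq_or_of_mul_self_eq_smul X.linearIndependent_M_three_M_four hE
      (x := 1 + ∑ t ∈ T, (X.c t 3 3 : ℤ)) (y := ∑ t ∈ T, (X.c t 3 4 : ℤ))
      (by rw [hmul 3 (by decide)]; module)
      (by rw [hmul 4 (by decide), hc4 3 (by decide), hc4 4 (by decide)]; module)
      with h | ⟨hx, hy⟩
  · exact h
  · refine absurd ⟨hE, ?_⟩ (X.radical 3 (by decide) T hT (hT12.trans (by decide)))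
    rw [hmul 3 (by decide)]
    simp only [n] at hx
    linear_combination (norm := module) hx • X.M 3 + hy • X.M 4

lemma c_one_three_four : X.c 1 3 4 = X.c 1 3 3 + 1 := by
  have h := X.one_add_sum_c_three_three_eq (T := {1}) (singleton_nonempty 1) (by decide)
    (by simpa [X.M_zero, n] using X.N0_sq)
  simp only [sum_singleton] at h
  omega

lemma c_two_three_three : X.c 2 3 3 = X.c 2 3 4 := by
  have h := X.one_add_sum_c_three_three_eq (T := {1, 2}) ⟨1, by decide⟩ (by decide)
    (by
      rw [sum_pair (by decide), sum_pair (by decide), ← X.M_zero]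
      simpa only [n, add_assoc, Nat.cast_add, Nat.cast_one] using X.N1_sq)
  rw [sum_pair (by decide), sum_pair (by decide)] at h
  have := X.c_one_three_four
  omega

lemma c_one_three_four_mul : (X.c 1 3 4 : ℤ) * (X.n 3 + X.n 4) = (1 + X.n 1) * X.n 3 := by
  have htr : (X.c 1 3 4 * X.n 4 : ℤ) = X.c 1 4 3 * X.n 3 := by exact_mod_cast X.c_mul_n 1 3 4
  have hsum : (X.c 1 3 3 + X.c 1 4 3 : ℤ) = X.n 1 := by
    exact_mod_cast X.c_low_three_add_c_low_four (a := 1) (k := 3) (by decide) (by decide)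
  have hb : (X.c 1 3 4 : ℤ) = X.c 1 3 3 + 1 := by exact_mod_cast X.c_one_three_four
  linear_combination htr + X.n 3 * hsum + X.n 3 * hb

lemma c_two_three_four_mul : (X.c 2 3 4 : ℤ) * (X.n 3 + X.n 4) = X.n 2 * X.n 3 := by
  have htr : (X.c 2 3 4 * X.n 4 : ℤ) = X.c 2 4 3 * X.n 3 := by exact_mod_cast X.c_mul_n 2 3 4
  have hsum : (X.c 2 3 3 + X.c 2 4 3 : ℤ) = X.n 2 := by
    exact_mod_cast X.c_low_three_add_c_low_four (a := 2) (k := 3) (by decide) (by decide)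
  have ha : (X.c 2 3 3 : ℤ) = X.c 2 3 4 := by exact_mod_cast X.c_two_three_three
  linear_combination htr + X.n 3 * hsum - X.n 3 * ha

lemma c_two_high_three_eq_four {i : Fin 5} (hi : i = 3 ∨ i = 4) : X.c 2 i 3 = X.c 2 i 4 := by
  rcases hi with rfl | rfl
  · exact X.c_two_three_three
  · have h3 := X.c_low_three_add_c_low_four (a := 2) (k := 3) (by decide) (by decide)
    have h4 := X.c_low_three_add_c_low_four (a := 2) (k := 4) (by decide) (by decide)
    have := X.c_two_three_three
    omega

lemma c_two_high_four_eq {i : Fin 5} (hi : i = 3 ∨ i = 4) :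
    (X.c 2 i 4 : ℚ) = X.n 2 * X.n i / (X.n 3 + X.n 4) := by
  have hpos := X.n_pos 3
  rw [eq_div_iff (by positivity)]
  have hx := X.c_two_three_four_mul
  suffices (X.c 2 i 4 : ℤ) * (X.n 3 + X.n 4) = X.n 2 * X.n i by exact_mod_cast this
  rcases hi with rfl | rfl
  · exact hx
  · have hsum : (X.c 2 3 4 + X.c 2 4 4 : ℤ) = X.n 2 := by
      exact_mod_cast X.c_low_three_add_c_low_four (a := 2) (k := 4) (by decide) (by decide)
    linear_combination (X.n 3 + X.n 4 : ℤ) * hsum - hx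

lemma c_high_high_one_eq {i j : Fin 5} (hij : (i = 3 ∧ j = 4) ∨ (i = 4 ∧ j = 3)) :
    (X.c i i 1 : ℚ)
      = X.n i * (X.n 1 * X.n i - X.n j) / (X.n 1 * (X.n 3 + X.n 4)) := by
  have hpos1 := X.n_pos 1
  have hpos3 := X.n_pos 3
  rw [eq_div_iff (by positivity)]
  have hx := X.c_one_three_four_mul
  suffices (X.c i i 1 : ℤ) * (X.n 1 * (X.n 3 + X.n 4)) = X.n i * (X.n 1 * X.n i - X.n j) by
    exact_mod_cast this
  have htr : (X.c i i 1 * X.n 1 : ℤ) = X.c 1 i i * X.n i := by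
    exact_mod_cast (X.c_mul_n i i 1).trans (by rw [X.c_comm i 1 i])
  rcases hij with ⟨rfl, rfl⟩ | ⟨rfl, rfl⟩
  · have hb : (X.c 1 3 4 : ℤ) = X.c 1 3 3 + 1 := by exact_mod_cast X.c_one_three_four
    linear_combination (X.n 3 + X.n 4 : ℤ) * htr - X.n 3 * (X.n 3 + X.n 4 : ℤ) * hb + X.n 3 * hx
  · have hsum : (X.c 1 3 4 + X.c 1 4 4 : ℤ) = X.n 1 := by
      exact_mod_cast X.c_low_three_add_c_low_four (a := 1) (k := 4) (by decide) (by decide)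
    linear_combination
      (X.n 3 + X.n 4 : ℤ) * htr + X.n 4 * (X.n 3 + X.n 4 : ℤ) * hsum - X.n 4 * hx

lemma c_high_high_two_eq {i : Fin 5} (hi : i = 3 ∨ i = 4) :
    (X.c i i 2 : ℚ) = X.n i ^ 2 / (X.n 3 + X.n 4) := by
  have hpos2 := X.n_pos 2
  have hpos3 := X.n_pos 3
  rw [eq_div_iff (by positivity)]
  have hx := X.c_two_three_four_mul
  suffices (X.n 2 : ℤ) * (X.c i i 2 * (X.n 3 + X.n 4)) = X.n 2 * X.n i ^ 2 by
    exact_mod_cast mul_left_cancel₀ (by positivity) this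
  have htr : (X.c i i 2 * X.n 2 : ℤ) = X.c 2 i i * X.n i := by
    exact_mod_cast (X.c_mul_n i i 2).trans (by rw [X.c_comm i 2 i])
  rcases hi with rfl | rfl
  · have ha : (X.c 2 3 3 : ℤ) = X.c 2 3 4 := by exact_mod_cast X.c_two_three_three
    linear_combination (X.n 3 + X.n 4 : ℤ) * htr + X.n 3 * (X.n 3 + X.n 4 : ℤ) * ha + X.n 3 * hx
  · have hsum : (X.c 2 3 4 + X.c 2 4 4 : ℤ) = X.n 2 := by
      exact_mod_cast X.c_low_three_add_c_low_four (a := 2) (k := 4) (by decide) (by decide)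
    linear_combination
      (X.n 3 + X.n 4 : ℤ) * htr + X.n 4 * (X.n 3 + X.n 4 : ℤ) * hsum - X.n 4 * hx

lemma sum_c_fin_five (i k : Fin 5) :
    (if i = k then 1 else 0) + X.c 1 i k + X.c 2 i k + X.c i 3 k + X.c i 4 k = X.n i := by
  rw [← X.sum_c i k, Fin.sum_univ_five, c_zero_right, X.c_comm i 1, X.c_comm i 2]

lemma c_three_four_three_eq_four (hc : X.c 3 3 3 = X.c 3 3 4) : X.c 3 4 3 = X.c 3 4 4 := by
  have r33 := X.sum_c_fin_five 3 3
  have r34 := X.sum_c_fin_five 3 4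
  have hb := X.c_one_three_four
  have ha := X.c_two_three_three
  rw [if_pos rfl] at r33
  rw [if_neg (by decide)] at r34
  omega

lemma c_high_high_three_eq_four (hc : X.c 3 3 3 = X.c 3 3 4) {i : Fin 5} (hi : i = 3 ∨ i = 4) :
    X.c i i 3 = X.c i i 4 := by
  rcases hi with rfl | rfl
  · exact hc
  · have r43 := X.sum_c_fin_five 4 3
    have r44 := X.sum_c_fin_five 4 4
    have h13 := X.c_low_three_add_c_low_four (a := 1) (k := 3) (by decide) (by decide)
    have h14 := X.c_low_three_add_c_low_four (a := 1) (k := 4) (by decide) (by decide)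
    have h23 := X.c_low_three_add_c_low_four (a := 2) (k := 3) (by decide) (by decide)
    have h24 := X.c_low_three_add_c_low_four (a := 2) (k := 4) (by decide) (by decide)
    have hb := X.c_one_three_four
    have ha := X.c_two_three_three
    have hu := X.c_three_four_three_eq_four hc
    rw [X.c_comm 4 3 3] at r43
    rw [X.c_comm 4 3 4] at r44
    rw [if_neg (by decide)] at r43
    rw [if_pos rfl] at r44
    omega

lemma c_high_high_four_eq (hc : X.c 3 3 3 = X.c 3 3 4) {i : Fin 5} (hi : i = 3 ∨ i = 4) :
    (X.c i i 4 : ℚ) = X.n i ^ 2 * (X.n 3 + X.n 4 - X.n 2 - X.n 1 - 1) / (X.n 3 + X.n 4) ^ 2 := by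
  have hpos := X.n_pos 3
  rw [eq_div_iff (by positivity)]
  have hx := X.c_one_three_four_mul
  have hx2 := X.c_two_three_four_mul
  suffices (X.c i i 4 : ℤ) * (X.n 3 + X.n 4) ^ 2
      = X.n i ^ 2 * (X.n 3 + X.n 4 - X.n 2 - X.n 1 - 1) by exact_mod_cast this
  rcases hi with rfl | rfl
  · have htr : (X.c 3 4 3 * X.n 3 : ℤ) = X.c 3 3 4 * X.n 4 := by exact_mod_cast X.c_mul_n 3 4 3
    have hrow : (X.c 3 3 4 + X.c 3 4 3 + X.c 1 3 4 + X.c 2 3 4 : ℤ) = X.n 3 := by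
      have r33 := X.sum_c_fin_five 3 3
      have hb := X.c_one_three_four
      have ha := X.c_two_three_three
      rw [if_pos rfl] at r33
      omega
    have hs : (X.c 3 3 4 : ℤ) * (X.n 3 + X.n 4) = (X.n 3 - X.c 1 3 4 - X.c 2 3 4) * X.n 3 := by
      linear_combination X.n 3 * hrow - htr
    linear_combination (X.n 3 + X.n 4 : ℤ) * hs - X.n 3 * hx - X.n 3 * hx2
  · have htr : (X.c 4 4 3 * X.n 3 : ℤ) = X.c 3 4 4 * X.n 4 := by
      exact_mod_cast (X.c_mul_n 4 4 3).trans (by rw [X.c_comm 4 3 4])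
    have hpq : (X.c 4 4 3 : ℤ) = X.c 4 4 4 := by
      exact_mod_cast X.c_high_high_three_eq_four hc (Or.inr rfl)
    have hrow : (X.c 3 4 4 + X.c 4 4 4 + 1 + X.n 1 + X.n 2 : ℤ)
        = X.n 4 + X.c 1 3 4 + X.c 2 3 4 := by
      have r44 := X.sum_c_fin_five 4 4
      have h14 := X.c_low_three_add_c_low_four (a := 1) (k := 4) (by decide) (by decide)
      have h24 := X.c_low_three_add_c_low_four (a := 2) (k := 4) (by decide) (by decide)
      rw [if_pos rfl, X.c_comm 4 3 4] at r44
      omega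
    have hs : (X.c 4 4 4 : ℤ) * (X.n 3 + X.n 4) = (X.c 3 4 4 + X.c 4 4 4) * X.n 4 := by
      linear_combination htr - X.n 3 * hpq
    linear_combination (X.n 3 + X.n 4 : ℤ) * hs + X.n 4 * (X.n 3 + X.n 4 : ℤ) * hrow
      + X.n 4 * hx + X.n 4 * hx2

lemma c_high_high_two_eq_c_high_high_one_add
    (heq : 1 / (X.n 3 : ℚ) + 1 / (X.n 4 : ℚ) = 1 / (X.n 1 : ℚ) - 1 / ((X.n 1 : ℚ) + 1))
    {i j : Fin 5} (hij : (i = 3 ∧ j = 4) ∨ (i = 4 ∧ j = 3)) :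
    X.c i i 2 = X.c i i 1 + X.n 1 + 1 := by
  have h1 := X.n_pos 1
  have h3 := X.n_pos 3
  have h4 := X.n_pos 4
  have hi : i = 3 ∨ i = 4 := hij.imp And.left And.left
  have hEq1 : (X.n 3 * X.n 4 : ℚ) = X.n 1 * (X.n 1 + 1) * (X.n 3 + X.n 4) := by
    field_simp at heq
    linear_combination -heq
  suffices (X.c i i 2 : ℚ) = X.c i i 1 + X.n 1 + 1 by exact_mod_cast this
  rw [X.c_high_high_two_eq hi, X.c_high_high_one_eq hij]
  field_simp
  rcases hij with ⟨rfl, rfl⟩ | ⟨rfl, rfl⟩ <;> linear_combination hEq1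

lemma M_two_add_mul_self {i : Fin 5} (hi : 2 < i) (h2i : X.c 2 i 3 = X.c 2 i 4)
    (hii3 : X.c i i 3 = X.c i i 4) (hii2 : X.c i i 2 = X.c i i 1 + X.n 1 + 1) :
    (X.M 2 + X.M i) * (X.M 2 + X.M i)
      = ((X.n 2 + X.n i : ℕ) : ℤ) • (1 : Matrix V V ℤ)
        + ((X.n 2 + X.c i i 1 : ℕ) : ℤ) • ((X.M 0 + X.M 1 + X.M 2) - 1)
        + ((2 * X.c 2 i 4 + X.c i i 4 : ℕ) : ℤ)
          • ((Matrix.of fun _ _ => (1 : ℤ)) - (X.M 0 + X.M 1 + X.M 2)) := by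
  have h222 : (X.c 2 2 2 : ℤ) = X.n 2 - X.n 1 - 1 := by have := X.c_two_two_two; omega
  have hexpand : (X.M 2 + X.M i) * (X.M 2 + X.M i)
      = X.M 2 * X.M 2 + 2 • (X.M 2 * X.M i) + X.M i * X.M i := by
    rw [add_mul, mul_add, mul_add, X.M_mul_comm i 2]
    abel
  rw [hexpand, X.mul_M, X.mul_M, X.mul_M, ← X.sum_M, ← X.M_zero]
  simp only [Fin.sum_univ_five, X.c_eq_zero_of_ne (show (2 : Fin 5) ≠ i by omega),
    X.c_low_high_low (j := i) (a := 2) le_rfl hi (by decide : (1 : Fin 5) ≤ 2),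
    X.c_low_high_low (j := i) (a := 2) le_rfl hi (le_rfl : (2 : Fin 5) ≤ 2),
    X.c_low_low_high (a := 2) (b := 2) (k := 3) le_rfl le_rfl (by decide),
    X.c_low_low_high (a := 2) (b := 2) (k := 4) le_rfl le_rfl (by decide),
    c_two_two_one, h2i, hii3, hii2]
  push_cast
  rw [h222]
  simp only [n]
  module

end HigmanianConfig

/-- under `c(3,3,3) = c(3,3,4)` and Eq. (1), for each `i ∈ {3,4}` the matrix
`M2 + Mi` is the adjacency matrix of a divisible design graph with class matrix
`N1 = M0 + M1 + M2` and the stated parameters. -/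
theorem higmanian_fusion_ddg_eq1 {V : Type*} [Fintype V] [DecidableEq V]
    (X : HigmanianConfig V)
    (hc : X.c 3 3 3 = X.c 3 3 4)
    (heq : 1 / (X.n 3 : ℚ) + 1 / (X.n 4 : ℚ)
        = 1 / (X.n 1 : ℚ) - 1 / ((X.n 1 : ℚ) + 1)) :
    ∀ i j : Fin 5, ((i = 3 ∧ j = 4) ∨ (i = 4 ∧ j = 3)) →
    ∃ l1 l2 m : ℕ,
      (l1 : ℚ) = (X.n 2 : ℚ)
          + (X.n i : ℚ) * ((X.n 1 : ℚ) * (X.n i : ℚ) - (X.n j : ℚ))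
            / ((X.n 1 : ℚ) * ((X.n 3 : ℚ) + (X.n 4 : ℚ))) ∧
      (l2 : ℚ) = 2 * (X.n 2 : ℚ) * (X.n i : ℚ) / ((X.n 3 : ℚ) + (X.n 4 : ℚ))
          + (X.n i : ℚ) ^ 2 * ((X.n 3 : ℚ) + (X.n 4 : ℚ) - (X.n 2 : ℚ) - (X.n 1 : ℚ) - 1)
            / ((X.n 3 : ℚ) + (X.n 4 : ℚ)) ^ 2 ∧
      (m : ℚ) = 1 + ((X.n 3 : ℚ) + (X.n 4 : ℚ)) / (1 + (X.n 1 : ℚ) + (X.n 2 : ℚ)) ∧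
      Fintype.card V = 1 + X.n 1 + X.n 2 + X.n 3 + X.n 4 ∧
      m * (1 + X.n 1 + X.n 2) = Fintype.card V ∧
      (X.M 2 + X.M i)ᵀ = X.M 2 + X.M i ∧
      (∀ x y, (X.M 2 + X.M i) x y = 0 ∨ (X.M 2 + X.M i) x y = 1) ∧
      (∀ x, (X.M 2 + X.M i) x x = 0) ∧
      (X.M 0 + X.M 1 + X.M 2)ᵀ = X.M 0 + X.M 1 + X.M 2 ∧
      (∀ x y, (X.M 0 + X.M 1 + X.M 2) x y = 0 ∨ (X.M 0 + X.M 1 + X.M 2) x y = 1) ∧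
      (∀ x, (X.M 0 + X.M 1 + X.M 2) x x = 1) ∧
      (X.M 0 + X.M 1 + X.M 2) * (X.M 0 + X.M 1 + X.M 2)
          = ((1 + X.n 1 + X.n 2 : ℕ) : ℤ) • (X.M 0 + X.M 1 + X.M 2) ∧
      (X.M 2 + X.M i) * (X.M 2 + X.M i)
          = ((X.n 2 + X.n i : ℕ) : ℤ) • (1 : Matrix V V ℤ)
            + (l1 : ℤ) • ((X.M 0 + X.M 1 + X.M 2) - 1)
            + (l2 : ℤ) • ((Matrix.of fun _ _ => (1 : ℤ)) - (X.M 0 + X.M 1 + X.M 2)) := by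
  intro i j hij
  have hi : i = 3 ∨ i = 4 := hij.imp And.left And.left
  have hi2 : 2 < i := by rcases hi with rfl | rfl <;> decide
  obtain ⟨m, hmq, hm⟩ := X.exists_card_eq_mul
  refine ⟨X.n 2 + X.c i i 1, 2 * X.c 2 i 4 + X.c i i 4, m, ?_, ?_, hmq, X.card_eq, hm,
    by simp only [transpose_add, X.M_symm], X.M_add_M_apply_eq_zero_or_one hi2.ne,
    fun x => by simp [X.M_apply_self, show i ≠ 0 by omega], X.N1_transpose,
    X.N1_apply_eq_zero_or_one, X.N1_apply_self, X.N1_sq,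
    X.M_two_add_mul_self hi2 (X.c_two_high_three_eq_four hi) (X.c_high_high_three_eq_four hc hi)
      (X.c_high_high_two_eq_c_high_high_one_add heq hij)⟩
  · push_cast
    rw [X.c_high_high_one_eq hij]
  · push_cast
    rw [X.c_two_high_four_eq hi, X.c_high_high_four_eq hc hi]
    ring
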